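/- arXiv:1203.2518 — 5 statements merged into one kernel-verified Lean document; each statement's English description precedes it below -/
import Mathlib

section
/- Let X be a positive real-valued random variable with density f on (0,∞) that is strictly decreasing on (0,∞), and let D be the first (leading) decimal digit of X. Then P(D=1) > P(D=2) > ... > P(D=9). -/
/-! The digit-`k` set is the disjoint union over `n : ℤ` of the blocks `[k·10ⁿ, (k+1)·10ⁿ)`.
The block for `k + 1` is the block for `k` translated to the right by `10ⁿ`, so a strictly
decreasing density gives it strictly smaller mass; summing over `n` gives `P (k+1) < P k`. -/

open Set MeasureTheory Function

theorem setIntegral_Ico_add_lt_of_strictAntiOn {f : ℝ → ℝ} {a b c : ℝ} (hab : a < b) (hc : 0 < c)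
    (hf_int : IntegrableOn f (Icc a (b + c))) (hf_anti : StrictAntiOn f (Icc a (b + c))) :
    ∫ x in Ico (a + c) (b + c), f x < ∫ x in Ico a b, f x := by
  rw [integral_Ico_eq_integral_Ioc, integral_Ico_eq_integral_Ioc,
    ← intervalIntegral.integral_of_le (by linarith), ← intervalIntegral.integral_of_le hab.le,
    ← intervalIntegral.integral_comp_add_right, ← sub_pos]
  have hfi : IntervalIntegrable f volume a b :=
    (hf_int.mono_set (by rw [uIcc_of_le hab.le]; exact Icc_subset_Icc_right (by linarith))
      ).intervalIntegrable
  have hfi_shift : IntervalIntegrable (fun x => f (x + c)) volume a b := by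
    have h : IntervalIntegrable f volume (a + c) (b + c) :=
      (hf_int.mono_set (by rw [uIcc_of_le (by linarith)]; exact Icc_subset_Icc_left (by linarith))
        ).intervalIntegrable
    simpa using h.comp_add_right c
  rw [← intervalIntegral.integral_sub hfi hfi_shift]
  refine intervalIntegral.intervalIntegral_pos_of_pos_on (hfi.sub hfi_shift)
    (fun x hx => sub_pos.2 ?_) hab
  exact hf_anti ⟨hx.1.le, by linarith [hx.2]⟩ ⟨by linarith [hx.1], by linarith [hx.2]⟩
    (by linarith)

theorem setIntegral_Ico_succ_mul_lt {f : ℝ → ℝ} (hf_int : IntegrableOn f (Ioi 0))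
    (hf_anti : StrictAntiOn f (Ioi 0)) {j s : ℝ} (hj : 0 < j) (hs : 0 < s) :
    ∫ x in Ico ((j + 1) * s) ((j + 1 + 1) * s), f x < ∫ x in Ico (j * s) ((j + 1) * s), f x := by
  have hsub : Icc (j * s) ((j + 1) * s + s) ⊆ Ioi 0 := fun x hx =>
    (mul_pos hj hs).trans_le hx.1
  have h := setIntegral_Ico_add_lt_of_strictAntiOn (a := j * s) (b := (j + 1) * s)
    (by nlinarith) hs (hf_int.mono_set hsub) (hf_anti.mono hsub)
  rwa [show j * s + s = (j + 1) * s by ring, show (j + 1) * s + s = (j + 1 + 1) * s by ring] at h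

theorem pairwise_disjoint_Ico_mul_zpow_of_add_one_le {b j : ℝ} (hj : 0 < j) (hjb : j + 1 ≤ j * b) :
    Pairwise (Disjoint on fun n : ℤ => Ico (j * b ^ n) ((j + 1) * b ^ n)) := by
  have hb : 1 ≤ b := le_of_mul_le_mul_left (by linarith) hj
  have hmono : Monotone fun n : ℤ => j * b ^ n := fun m n hmn =>
    mul_le_mul_of_nonneg_left (zpow_le_zpow_right₀ hb hmn) hj.le
  have hsub (n : ℤ) :
      Ico (j * b ^ n) ((j + 1) * b ^ n) ⊆ Ico (j * b ^ n) (j * b ^ Order.succ n) := by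
    refine Ico_subset_Ico_right ?_
    rw [Order.succ_eq_add_one, zpow_add_one₀ (by positivity), ← mul_assoc, mul_right_comm]
    exact mul_le_mul_of_nonneg_right hjb (zpow_pos (by linarith) _).le
  exact hmono.pairwise_disjoint_on_Ico_succ.mono fun m n h => h.mono (hsub m) (hsub n)

theorem hasSum_integral_iUnion_Ico_mul_zpow {f : ℝ → ℝ} (hf_int : IntegrableOn f (Ioi 0))
    {b j : ℝ} (hj : 0 < j) (hjb : j + 1 ≤ j * b) :
    HasSum (fun n : ℤ => ∫ x in Ico (j * b ^ n) ((j + 1) * b ^ n), f x)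
      (∫ x in ⋃ n : ℤ, Ico (j * b ^ n) ((j + 1) * b ^ n), f x) := by
  have hb : 0 < b := pos_of_mul_pos_right (by linarith) hj.le
  have hsub : (⋃ n : ℤ, Ico (j * b ^ n) ((j + 1) * b ^ n)) ⊆ Ioi 0 :=
    iUnion_subset fun n x hx => (mul_pos hj (zpow_pos hb n)).trans_le hx.1
  exact hasSum_integral_iUnion (fun _ => measurableSet_Ico)
    (pairwise_disjoint_Ico_mul_zpow_of_add_one_le hj hjb) (hf_int.mono_set hsub)

theorem firstDigit_probs_strict_anti_general
    (f : ℝ → ℝ)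
    (hf_int : IntegrableOn f (Ioi 0))
    (hf_anti : StrictAntiOn f (Ioi 0))
    (P : ℕ → ℝ)
    (hP : ∀ k, P k =
      ∫ x in ⋃ n : ℤ, Ico ((k : ℝ) * 10 ^ n) (((k : ℝ) + 1) * 10 ^ n), f x) :
    ∀ k ∈ Finset.Icc 1 8, P (k + 1) < P k := by
  intro k hk
  have hk1 : (1 : ℝ) ≤ k := by exact_mod_cast (Finset.mem_Icc.1 hk).1
  have hblock (n : ℤ) := setIntegral_Ico_succ_mul_lt hf_int hf_anti (by linarith : (0 : ℝ) < k)
    (zpow_pos (by norm_num : (0 : ℝ) < 10) n)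
  rw [hP, hP]
  push_cast
  exact hasSum_lt (fun n => (hblock n).le) (hblock 0)
    (hasSum_integral_iUnion_Ico_mul_zpow hf_int (by linarith) (by linarith))
    (hasSum_integral_iUnion_Ico_mul_zpow hf_int (by linarith) (by linarith))

/-- If the density `f` of a positive random variable is strictly decreasing on `(0,∞)`,
then the probabilities of the first decimal digit are strictly decreasing in the digit. -/
theorem firstDigit_probs_strict_anti
    (f : ℝ → ℝ) (hf_nonneg : ∀ x, 0 ≤ f x)
    (hf_int : IntegrableOn f (Ioi 0))
    (hf_one : ∫ x in Ioi (0 : ℝ), f x = 1)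
    (hf_anti : StrictAntiOn f (Ioi 0))
    (P : ℕ → ℝ)
    (hP : ∀ k, P k =
      ∫ x in ⋃ n : ℤ, Ico ((k : ℝ) * 10 ^ n) (((k : ℝ) + 1) * 10 ^ n), f x) :
    ∀ k ∈ Finset.Icc 1 8, P (k + 1) < P k :=
  firstDigit_probs_strict_anti_general f hf_int hf_anti P hP
end

section
/- Let g : ℝ → [0,∞) be a probability density that is unimodal (non-decreasing up to some point b and non-increasing after), with maximum value M. Let Ḡ(z) = ∫₀ᶻ Σ_{n∈ℤ} g(n+u) du be the cumulative distribution function of the fractional part of a random variable with density g. Then for all z ∈ [0,1], |Ḡ(z) − z| ≤ 2M. -/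
open Set MeasureTheory

/-!
Fix `u` and cut `ℝ` into the unit intervals `[n + u, n + u + 1]`, whose masses sum to `1` and
are each at most `M`. Since `g` is monotone on every such interval not containing the mode,
each sample `g (n + u)` is dominated by the mass of the neighbouring interval on the side of the
mode, and each mass by its endpoint nearer the mode; both matchings are injective and miss only
two samples, resp. one mass. Hence `1 - M ≤ ḡ u ≤ 1 + 2M`, and integrating over `[0, z]` gives
`|Ḡ z - z| ≤ 2 M z`.
-/

theorem abs_intervalIntegral_sub_mul_le {F : ℝ → ℝ} {a b c C : ℝ} (hF : Measurable F)
    (h : ∀ u, |F u - c| ≤ C) : |(∫ u in a..b, F u) - c * (b - a)| ≤ C * |b - a| := by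
  have hFi : IntervalIntegrable F volume a b :=
    (intervalIntegrable_const (c := |c| + C)).mono_fun' hF.aestronglyMeasurable
      (ae_of_all _ fun u => by
        have := abs_sub_abs_le_abs_sub (F u) c
        simp only [Real.norm_eq_abs]
        linarith [h u])
  calc |(∫ u in a..b, F u) - c * (b - a)| = ‖∫ u in a..b, (F u - c)‖ := by
        rw [intervalIntegral.integral_sub hFi intervalIntegrable_const,
          intervalIntegral.integral_const, smul_eq_mul, mul_comm, Real.norm_eq_abs]
    _ ≤ C * |b - a| := intervalIntegral.norm_integral_le_of_norm_le_const fun u _ => h u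

theorem MeasureTheory.Integrable.hasSum_intervalIntegral_int {g : ℝ → ℝ} (hint : Integrable g) :
    HasSum (fun m : ℤ => ∫ t in (m : ℝ)..m + 1, g t) (∫ t, g t) := by
  simpa using hint.hasSum_intervalIntegral 0

def IsUnimodalAt (g : ℝ → ℝ) (b : ℝ) : Prop :=
  MonotoneOn g (Iic b) ∧ AntitoneOn g (Ici b)

namespace IsUnimodalAt

variable {g : ℝ → ℝ} {b x : ℝ}

theorem apply_le (hg : IsUnimodalAt g b) (y : ℝ) : g y ≤ g b := by
  rcases le_total y b with h | h
  · exact hg.1 h self_mem_Iic h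
  · exact hg.2 self_mem_Ici h h

theorem iSup_eq (hg : IsUnimodalAt g b) : ⨆ y, g y = g b :=
  le_antisymm (ciSup_le hg.apply_le) (le_ciSup ⟨g b, by rintro _ ⟨y, rfl⟩; exact hg.apply_le y⟩ b)

theorem measurable (hg : IsUnimodalAt g b) : Measurable g := by
  have hleft : Monotone fun y => g (min y b) := fun y₁ y₂ h =>
    hg.1 (min_le_right y₁ b) (min_le_right y₂ b) (min_le_min_right b h)
  have hright : Antitone fun y => g (max y b) := fun y₁ y₂ h =>
    hg.2 (le_max_right y₁ b) (le_max_right y₂ b) (max_le_max_right b h)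
  have h : g = fun y => if y ≤ b then g (min y b) else g (max y b) := by
    ext y
    split_ifs with hy
    · rw [min_eq_left hy]
    · rw [max_eq_left (le_of_not_ge hy)]
  rw [h]
  exact Measurable.ite measurableSet_Iic hleft.measurable hright.measurable

theorem comp_add_right (hg : IsUnimodalAt g b) (c : ℝ) :
    IsUnimodalAt (fun t => g (t + c)) (b - c) :=
  ⟨fun _ hx _ hy h => hg.1 (show _ ≤ b by linarith [mem_Iic.1 hx])
      (show _ ≤ b by linarith [mem_Iic.1 hy]) (by linarith),
    fun _ hx _ hy h => hg.2 (show b ≤ _ by linarith [mem_Ici.1 hx])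
      (show b ≤ _ by linarith [mem_Ici.1 hy]) (by linarith)⟩

theorem apply_le_intervalIntegral (hg : IsUnimodalAt g b) (hx : x + 1 ≤ b) :
    g x ≤ ∫ t in x..x + 1, g t := by
  simpa using (hg.1.mono fun t ht => (ht.2.trans (by simpa using hx) : t ≤ b)).sum_le_integral
    (a := 1)

theorem intervalIntegral_le_apply_add_one (hg : IsUnimodalAt g b) (hx : x + 1 ≤ b) :
    ∫ t in x..x + 1, g t ≤ g (x + 1) := by
  simpa using (hg.1.mono fun t ht => (ht.2.trans (by simpa using hx) : t ≤ b)).integral_le_sum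
    (a := 1)

theorem apply_add_one_le_intervalIntegral (hg : IsUnimodalAt g b) (hx : b ≤ x) :
    g (x + 1) ≤ ∫ t in x..x + 1, g t := by
  simpa using (hg.2.mono fun t ht => (hx.trans ht.1 : b ≤ t)).sum_le_integral
    (a := 1)

theorem intervalIntegral_le_apply (hg : IsUnimodalAt g b) (hx : b ≤ x) :
    ∫ t in x..x + 1, g t ≤ g x := by
  simpa using (hg.2.mono fun t ht => (hx.trans ht.1 : b ≤ t)).integral_le_sum
    (a := 1)

theorem summable_int_and_tsum_int_le (hg : IsUnimodalAt g b) (hb : b ∈ Icc 0 1)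
    (h0 : ∀ y, 0 ≤ g y) (hint : Integrable g) :
    Summable (fun n : ℤ => g n) ∧ ∑' n : ℤ, g n ≤ (∫ t, g t) + 2 * g b := by
  have hI := hint.hasSum_intervalIntegral_int
  let S : Finset ℤ := {0, 1}
  -- the interval `[e n, e n + 1]` lies between the sample point `n` and the mode
  let e : {n : ℤ // n ∉ S} → ℤ := fun n => if (n : ℤ) < 0 then n else n - 1
  have he : Function.Injective e := by
    rintro ⟨n, hn⟩ ⟨m, hm⟩ h
    simp only [S, e, Finset.mem_insert, Finset.mem_singleton] at hn hm h
    rw [Subtype.mk.injEq]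
    split_ifs at h <;> omega
  have hle : ∀ n : {n : ℤ // n ∉ S}, g ((n : ℤ) : ℝ) ≤ ∫ t in (e n : ℝ)..(e n : ℝ) + 1, g t := by
    rintro ⟨n, hn⟩
    simp only [S, Finset.mem_insert, Finset.mem_singleton] at hn
    by_cases hneg : n < 0
    · simp only [e, if_pos hneg]
      refine hg.apply_le_intervalIntegral ?_
      have : (n : ℝ) ≤ -1 := by exact_mod_cast (by omega : n ≤ -1)
      linarith [hb.1]
    · simp only [e, if_neg hneg]
      have h1 : (1 : ℝ) ≤ ((n - 1 : ℤ) : ℝ) := by exact_mod_cast (by omega : 1 ≤ n - 1)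
      simpa using hg.apply_add_one_le_intervalIntegral (hb.2.trans h1)
  have hsub : Summable fun n : {n : ℤ // n ∉ S} => g n :=
    .of_nonneg_of_le (fun _ => h0 _) hle (hI.summable.comp_injective he)
  have hsum : Summable fun n : ℤ => g n := (Finset.summable_compl_iff S).1 hsub
  refine ⟨hsum, ?_⟩
  have hS : ∑ n ∈ S, g n ≤ 2 * g b := by
    simp only [S, Finset.sum_pair zero_ne_one, Int.cast_zero, Int.cast_one]
    linarith [hg.apply_le 0, hg.apply_le 1]
  have htail := hsub.tsum_le_tsum_of_inj e he
    (fun m _ => intervalIntegral.integral_nonneg (by linarith) fun t _ => h0 t) hle hI.summable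
  rw [hI.tsum_eq] at htail
  rw [← hsum.sum_add_tsum_subtype_compl S]
  linarith

theorem integral_le_tsum_int_add (hg : IsUnimodalAt g b) (hb : b ∈ Icc 0 1)
    (h0 : ∀ y, 0 ≤ g y) (hint : Integrable g) :
    ∫ t, g t ≤ (∑' n : ℤ, g n) + g b := by
  have hI := hint.hasSum_intervalIntegral_int
  let S : Finset ℤ := {0}
  -- the sample point `e m` is the endpoint of `[m, m + 1]` nearer to the mode
  let e : {n : ℤ // n ∉ S} → ℤ := fun m => if (m : ℤ) < 0 then m + 1 else m
  have he : Function.Injective e := by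
    rintro ⟨n, hn⟩ ⟨m, hm⟩ h
    simp only [S, e, Finset.mem_singleton] at hn hm h
    rw [Subtype.mk.injEq]
    split_ifs at h <;> omega
  have hle : ∀ m : {n : ℤ // n ∉ S}, ∫ t in ((m : ℤ) : ℝ)..((m : ℤ) : ℝ) + 1, g t ≤ g (e m) := by
    rintro ⟨m, hm⟩
    simp only [S, Finset.mem_singleton] at hm
    by_cases hneg : m < 0
    · simp only [e, if_pos hneg]
      have : (m : ℝ) ≤ -1 := by exact_mod_cast (by omega : m ≤ -1)
      simpa using hg.intervalIntegral_le_apply_add_one (by linarith [hb.1] : (m : ℝ) + 1 ≤ b)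
    · simp only [e, if_neg hneg]
      have : (1 : ℝ) ≤ m := by exact_mod_cast (by omega : 1 ≤ m)
      exact hg.intervalIntegral_le_apply (hb.2.trans this)
  have hmass : ∫ t in (0 : ℝ)..1, g t ≤ g b := by
    simpa using intervalIntegral.integral_mono_on zero_le_one hint.intervalIntegrable
      intervalIntegrable_const fun t _ => hg.apply_le t
  have htail := (hI.summable.comp_injective Subtype.val_injective).tsum_le_tsum_of_inj e he
    (fun n _ => h0 n) hle (hg.summable_int_and_tsum_int_le hb h0 hint).1
  rw [← hI.tsum_eq, ← hI.summable.sum_add_tsum_subtype_compl S]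
  simp only [S, Finset.sum_singleton, Int.cast_zero, zero_add] at htail ⊢
  linarith

theorem tsum_int_add_mem_Icc (hg : IsUnimodalAt g b) (h0 : ∀ y, 0 ≤ g y) (hint : Integrable g)
    (u : ℝ) : ∑' n : ℤ, g (n + u) ∈ Icc ((∫ t, g t) - g b) ((∫ t, g t) + 2 * g b) := by
  -- translating by an integer shift of `u` moves the mode into `[0, 1]`
  set c := u + ⌊b - u⌋
  have hbc : b - c ∈ Icc 0 1 := by
    have h := Int.floor_le (b - u)
    have h' := Int.lt_floor_add_one (b - u)
    constructor <;> linarith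
  have hgc := hg.comp_add_right c
  have hintc := hint.comp_add_right c
  have hshift : ∑' n : ℤ, g (n + u) = ∑' n : ℤ, g (n + c) := by
    rw [← (Equiv.addRight ⌊b - u⌋).tsum_eq]
    simp only [Equiv.coe_addRight, Int.cast_add, c, add_comm u, add_assoc]
  have hmass : ∫ t, g (t + c) = ∫ t, g t := integral_add_right_eq_self g c
  have hupper := (hgc.summable_int_and_tsum_int_le hbc (fun _ => h0 _) hintc).2
  have hlower := hgc.integral_le_tsum_int_add hbc (fun _ => h0 _) hintc
  simp only [sub_add_cancel, hmass] at hupper hlower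
  rw [hshift]
  constructor <;> linarith

end IsUnimodalAt

/-- Gauvrit–Delahaye bound: if the density `g` is unimodal with maximum `M`, then the CDF
`Ḡ` of the fractional part satisfies `|Ḡ z − z| ≤ 2 M` for all `z ∈ [0,1]`. -/
theorem unimodal_fract_cdf_bound
    (g : ℝ → ℝ) (hg_nonneg : ∀ y, 0 ≤ g y)
    (hg_int : Integrable g)
    (hg_one : ∫ y, g y = 1)
    (hg_unimodal : ∃ b : ℝ, MonotoneOn g (Iic b) ∧ AntitoneOn g (Ici b))
    (M : ℝ) (hM : M = ⨆ y, g y)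
    (G : ℝ → ℝ)
    (hG : ∀ z, G z = ∫ u in (0 : ℝ)..z, ∑' n : ℤ, g (n + u)) :
    ∀ z ∈ Icc (0 : ℝ) 1, |G z - z| ≤ 2 * M := by
  obtain ⟨b, hg⟩ := hg_unimodal
  replace hg : IsUnimodalAt g b := hg
  rw [hg.iSup_eq] at hM
  subst hM
  have hwrapped (u : ℝ) : |∑' n : ℤ, g (n + u) - 1| ≤ 2 * g b := by
    have h := hg.tsum_int_add_mem_Icc hg_nonneg hg_int u
    rw [hg_one] at h
    rw [abs_le]
    constructor <;> linarith [h.1, h.2, hg_nonneg b]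
  have hmeas : Measurable fun u => ∑' n : ℤ, g (n + u) :=
    Measurable.tsum fun n => hg.measurable.comp (measurable_const_add _)
  intro z ⟨hz0, hz1⟩
  have h := abs_intervalIntegral_sub_mul_le (a := 0) (b := z) hmeas hwrapped
  rw [one_mul, sub_zero, abs_of_nonneg hz0] at h
  rw [hG]
  exact h.trans (mul_le_of_le_one_right (by linarith [hg_nonneg b]) hz1)
end

section
/- Let g : ℝ → [0,∞) be a probability density of finite total variation TV(g), and let ḡ(z) = Σ_{n∈ℤ} g(n+z) for z ∈ [0,1] (with ḡ(1)=ḡ(0)). Then the total variation of ḡ on [0,1] is at most TV(g). -/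
open Set MeasureTheory

/-!
Along a partition `0 ≤ u₀ ≤ ⋯ ≤ uₘ ≤ 1`, the variation of `ḡ` is at most the sum over `n ∈ ℤ` of
the variations of `g` along the translated partitions `n + uᵢ`. These lie in the intervals
`[n, n + 1]`, which overlap only at endpoints, so their variations add up to at most `TV(g)`.

The series `∑ₙ g (n + z)` converges for every `z`: by Tonelli it converges absolutely for almost
every `t`, and for `z ≤ t ≤ z + 1` the differences satisfy `∑ₙ |g (n + z) - g (n + t)| ≤ TV(g)`.
-/

theorem sum_eVariationOn_le_eVariationOn_biUnion {ι α E : Type*} [LinearOrder ι] [LinearOrder α]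
    [PseudoEMetricSpace E] (f : α → E)
    {s : ι → Set α} (hs : ∀ i j, i < j → ∀ x ∈ s i, ∀ y ∈ s j, x ≤ y) (F : Finset ι) :
    ∑ i ∈ F, eVariationOn f (s i) ≤ eVariationOn f (⋃ i ∈ F, s i) := by
  induction F using Finset.induction_on_max with
  | empty => simp
  | insert j F hj ih =>
    rw [Finset.sum_insert (fun h => lt_irrefl j (hj j h)), Finset.set_biUnion_insert, union_comm,
      add_comm]
    refine (add_le_add_left ih _).trans (eVariationOn.add_le_union f ?_)
    simp only [mem_iUnion]
    rintro x ⟨i, hi, hx⟩ y hy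
    exact hs i j (hj i hi) x hx y hy

theorem tsum_eVariationOn_Icc_intCast_add_le {E : Type*} [PseudoEMetricSpace E] (f : ℝ → E)
    (a : ℝ) : ∑' n : ℤ, eVariationOn f (Icc (n + a) (n + a + 1)) ≤ eVariationOn f univ := by
  rw [ENNReal.tsum_eq_iSup_sum]
  refine iSup_le fun F => (sum_eVariationOn_le_eVariationOn_biUnion f ?_ F).trans
    (eVariationOn.mono f (subset_univ _))
  intro i j hij x hx y hy
  have : (i : ℝ) + 1 ≤ j := by exact_mod_cast hij
  linarith [hx.2, hy.1]

theorem edist_tsum_le_tsum_edist {ι E : Type*} [NormedAddCommGroup E] {f g : ι → E}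
    (hf : Summable f) (hg : Summable g) :
    edist (∑' i, f i) (∑' i, g i) ≤ ∑' i, edist (f i) (g i) := by
  simpa only [edist_eq_enorm_sub, ← hf.tsum_sub hg] using enorm_tsum_le_tsum_enorm

theorem eVariationOn_tsum_le {ι α E : Type*} [LinearOrder α] [NormedAddCommGroup E]
    (f : ι → α → E) {s : Set α} (hf : ∀ x ∈ s, Summable fun i => f i x) :
    eVariationOn (fun x => ∑' i, f i x) s ≤ ∑' i, eVariationOn (f i) s := by
  refine iSup_le fun ⟨m, u, hu, us⟩ => ?_
  calc ∑ j ∈ Finset.range m, edist (∑' i, f i (u (j + 1))) (∑' i, f i (u j))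
      ≤ ∑ j ∈ Finset.range m, ∑' i, edist (f i (u (j + 1))) (f i (u j)) :=
        Finset.sum_le_sum fun j _ => edist_tsum_le_tsum_edist (hf _ (us _)) (hf _ (us _))
    _ = ∑' i, ∑ j ∈ Finset.range m, edist (f i (u (j + 1))) (f i (u j)) :=
        (Summable.tsum_finsetSum fun _ _ => ENNReal.summable).symm
    _ ≤ ∑' i, eVariationOn (f i) s := ENNReal.tsum_le_tsum fun i => eVariationOn.sum_le hu us

section
variable {E : Type*} [NormedAddCommGroup E] {f : ℝ → E}

theorem exists_mem_Ioc_summable_intCast_add [CompleteSpace E] (hf : Integrable f) (a : ℝ) :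
    ∃ t ∈ Ioc a (a + 1), Summable fun n : ℤ => f (n + t) := by
  have hmeas (n : ℤ) : AEMeasurable (fun t => ‖f (n + t)‖ₑ) (volume.restrict (Ioc a (a + 1))) :=
    (hf.1.comp_measurePreserving (measurePreserving_add_left volume (n : ℝ))).enorm.restrict
  have hlint : ∫⁻ t in Ioc a (a + 1), ∑' n : ℤ, ‖f (n + t)‖ₑ = ∫⁻ x, ‖f x‖ₑ := by
    rw [lintegral_tsum hmeas, ← setLIntegral_univ, ← iUnion_Ioc_add_intCast a,
      lintegral_iUnion (fun _ => measurableSet_Ioc) (pairwise_disjoint_Ioc_add_intCast a)]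
    refine tsum_congr fun n => ?_
    rw [(measurePreserving_add_left volume (n : ℝ)).setLIntegral_comp_emb
      (measurableEmbedding_addLeft _) (fun x => ‖f x‖ₑ), image_const_add_Ioc, ← add_assoc,
      add_comm (n : ℝ)]
  have hfin : ∀ᵐ t ∂volume.restrict (Ioc a (a + 1)), ∑' n : ℤ, ‖f (n + t)‖ₑ < ⊤ :=
    ae_lt_top' (AEMeasurable.tsum hmeas) (hlint ▸ hf.2.ne)
  have : (ae (volume.restrict (Ioc a (a + 1)))).NeBot := ae_restrict_neBot.2 (by simp)
  obtain ⟨t, ht, hsum⟩ := ((ae_restrict_mem measurableSet_Ioc).and hfin).exists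
  exact ⟨t, ht, Summable.of_enorm hsum.ne⟩

theorem summable_intCast_add_of_eVariationOn_ne_top [CompleteSpace E] (hf : Integrable f)
    (hV : eVariationOn f univ ≠ ⊤) (z : ℝ) : Summable fun n : ℤ => f (n + z) := by
  obtain ⟨t, ⟨hzt, htz⟩, hsum⟩ := exists_mem_Ioc_summable_intCast_add hf z
  have hdiff : Summable fun n : ℤ => f (n + z) - f (n + t) := by
    refine Summable.of_enorm (ne_top_of_le_ne_top hV ?_)
    calc ∑' n : ℤ, ‖f (n + z) - f (n + t)‖ₑ
        ≤ ∑' n : ℤ, eVariationOn f (Icc (n + z) (n + z + 1)) := by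
          refine ENNReal.tsum_le_tsum fun n => ?_
          rw [← edist_eq_enorm_sub]
          exact eVariationOn.edist_le f ⟨le_rfl, by linarith⟩ ⟨by linarith, by linarith⟩
      _ ≤ eVariationOn f univ := tsum_eVariationOn_Icc_intCast_add_le f z
  simpa using hdiff.add hsum

end

theorem eVariationOn_stacked_le_general
    (g : ℝ → ℝ)
    (hg_int : Integrable g)
    (hTV : eVariationOn g univ ≠ ⊤) :
    eVariationOn (fun z => ∑' n : ℤ, g (n + z)) (Icc (0 : ℝ) 1)
      ≤ eVariationOn g univ := by
  calc eVariationOn (fun z => ∑' n : ℤ, g (n + z)) (Icc (0 : ℝ) 1)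
      ≤ ∑' n : ℤ, eVariationOn (fun z => g (n + z)) (Icc 0 1) :=
        eVariationOn_tsum_le _ fun z _ => summable_intCast_add_of_eVariationOn_ne_top hg_int hTV z
    _ = ∑' n : ℤ, eVariationOn g (Icc (n + 0) (n + 0 + 1)) := by
        refine tsum_congr fun n => ?_
        rw [← Function.comp_def g, eVariationOn.comp_eq_of_monotoneOn g (HAdd.hAdd (n : ℝ))
          fun _ _ _ _ h => by gcongr, image_const_add_Icc, add_zero]
    _ ≤ eVariationOn g univ := tsum_eVariationOn_Icc_intCast_add_le g 0

/-- The total variation of the stacked density `ḡ(z) = ∑_{n∈ℤ} g (n+z)` on `[0,1]`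
is at most the total variation of `g` on `ℝ`. -/
theorem eVariationOn_stacked_le
    (g : ℝ → ℝ) (hg_nonneg : ∀ y, 0 ≤ g y)
    (hg_int : Integrable g)
    (hg_one : ∫ y, g y = 1)
    (hTV : eVariationOn g univ ≠ ⊤) :
    eVariationOn (fun z => ∑' n : ℤ, g (n + z)) (Icc (0 : ℝ) 1)
      ≤ eVariationOn g univ :=
  eVariationOn_stacked_le_general g hg_int hTV
end

section
/- Let g be a probability density on ℝ with finite total variation TV(g), and let Ḡ be the cumulative distribution function on [0,1] of the fractional part of a random variable with density g. Then for all 0 ≤ z₁ < z₂ ≤ 1, |(Ḡ(z₂) − Ḡ(z₁)) − (z₂ − z₁)| ≤ (z₂−z₁)(1−(z₂−z₁))·TV(g)/2. -/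
/-! The periodization `ḡ u = ∑ₙ g (n + u)` is 1-periodic with `∫₀¹ ḡ = ∫ g = 1`, and its
oscillation is at most `TV(g)/2`: for `v ≤ u ≤ v + 1` the points `n + v ≤ n + u ≤ n + v + 1`
interleave, so `2 (ḡ u - ḡ v)` is a sum of increments of `g` along a monotone chain.
With `I = [z₁, z₂]` and `J = [z₂, z₁ + 1]` the rest of a period, `A = Ḡ z₂ - Ḡ z₁ = ∫_I ḡ` and
`1 - A = ∫_J ḡ`; averaging `ḡ u - ḡ v ≤ TV(g)/2` over `u ∈ I`, `v ∈ J` gives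
`|J| A - |I| (1 - A) ≤ |I| |J| TV(g)/2`, i.e. `A - δ ≤ δ (1 - δ) TV(g)/2`, and swapping `I` and `J`
gives the other side. -/

open Set MeasureTheory

theorem Int.sum_Ico_sub (φ : ℤ → ℝ) {b c : ℤ} (hbc : b ≤ c) :
    ∑ n ∈ Finset.Ico b c, (φ (n + 1) - φ n) = φ c - φ b := by
  induction c, hbc using Int.leInduction with
  | base => simp
  | succ c hbc ih =>
    rw [← Finset.insert_Ico_right_eq_Ico_add_one hbc, Finset.sum_insert Finset.right_notMem_Ico, ih]
    ring

theorem Monotone.sum_sub_int_add_le {φ : ℝ → ℝ} (hφ : Monotone φ) {C : ℝ}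
    (hC : ∀ x y, φ x - φ y ≤ C) (a : ℝ) (F : Finset ℤ) :
    ∑ n ∈ F, (φ (a + n + 1) - φ (a + n)) ≤ C := by
  obtain ⟨b, hb⟩ := F.bddBelow
  obtain ⟨c, hc⟩ := F.bddAbove
  have hF : F ⊆ Finset.Ico (min b c) (c + 1) := fun n hn =>
    Finset.mem_Ico.2 ⟨(min_le_left _ _).trans (hb hn), Int.lt_add_one_iff.2 (hc hn)⟩
  have hstep : ∀ n : ℤ, φ (a + n + 1) - φ (a + n) = φ (a + ↑(n + 1)) - φ (a + n) := by
    intro n; push_cast; ring_nf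
  calc ∑ n ∈ F, (φ (a + n + 1) - φ (a + n))
      ≤ ∑ n ∈ Finset.Ico (min b c) (c + 1), (φ (a + n + 1) - φ (a + n)) :=
        Finset.sum_le_sum_of_subset_of_nonneg hF fun n _ _ =>
          sub_nonneg.2 (hφ (by linarith))
    _ = φ (a + ↑(c + 1)) - φ (a + ↑(min b c)) := by
        simp only [hstep]
        exact Int.sum_Ico_sub (fun n => φ (a + n)) ((min_le_right _ _).trans (by omega))
    _ ≤ C := hC _ _

theorem mul_integral_sub_mul_integral_le {f : ℝ → ℝ} {a b c d K : ℝ} (hab : a ≤ b) (hcd : c ≤ d)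
    (hf₁ : IntervalIntegrable f volume a b) (hf₂ : IntervalIntegrable f volume c d)
    (hK : ∀ u ∈ Icc a b, ∀ v ∈ Icc c d, f u - f v ≤ K) :
    (d - c) * (∫ x in a..b, f x) - (b - a) * (∫ x in c..d, f x) ≤ (b - a) * (d - c) * K := by
  have hpt : ∀ v ∈ Icc c d, (∫ x in a..b, f x) - (b - a) * K ≤ (b - a) * f v := by
    intro v hv
    have := intervalIntegral.integral_mono_on hab hf₁ intervalIntegrable_const
      fun u hu => (sub_le_iff_le_add'.1 (hK u hu v hv))
    rw [intervalIntegral.integral_const, smul_eq_mul] at this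
    linarith
  have :=
    intervalIntegral.integral_mono_on hcd intervalIntegrable_const (hf₂.const_mul (b - a)) hpt
  rw [intervalIntegral.integral_const, smul_eq_mul, intervalIntegral.integral_const_mul] at this
  linarith

section variation

variable {g : ℝ → ℝ}

theorem BoundedVariationOn.variationOnFromTo_le (hg : BoundedVariationOn g univ) (a b : ℝ) :
    variationOnFromTo g univ a b ≤ (eVariationOn g univ).toReal :=
  (le_abs_self _).trans (variationOnFromTo.abs_le_eVariationOn hg)

theorem BoundedVariationOn.monotone_variationOnFromTo (hg : BoundedVariationOn g univ) :
    Monotone (variationOnFromTo g univ 0) :=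
  monotoneOn_univ.1 (variationOnFromTo.monotoneOn hg.locallyBoundedVariationOn (mem_univ 0))

theorem BoundedVariationOn.sum_variationOnFromTo_int_add_le (hg : BoundedVariationOn g univ)
    (a : ℝ) (F : Finset ℤ) :
    ∑ n ∈ F, variationOnFromTo g univ (a + n) (a + n + 1) ≤ (eVariationOn g univ).toReal := by
  have hsub (x y : ℝ) := variationOnFromTo.sub_right hg.locallyBoundedVariationOn
    (mem_univ 0) (mem_univ y) (mem_univ x)
  calc ∑ n ∈ F, variationOnFromTo g univ (a + n) (a + n + 1)
      = ∑ n ∈ F, (variationOnFromTo g univ 0 (a + n + 1) - variationOnFromTo g univ 0 (a + n)) :=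
        Finset.sum_congr rfl fun n _ => (hsub _ _).symm
    _ ≤ _ := hg.monotone_variationOnFromTo.sum_sub_int_add_le
        (fun x y => by rw [hsub]; exact hg.variationOnFromTo_le _ _) a F

theorem BoundedVariationOn.summable_variationOnFromTo_int_add (hg : BoundedVariationOn g univ)
    (a : ℝ) : Summable fun n : ℤ => variationOnFromTo g univ (a + n) (a + n + 1) :=
  summable_of_sum_le (fun _ => variationOnFromTo.nonneg_of_le _ _ (by linarith))
    (hg.sum_variationOnFromTo_int_add_le a)

theorem BoundedVariationOn.tsum_variationOnFromTo_int_add_le (hg : BoundedVariationOn g univ)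
    (a : ℝ) :
    ∑' n : ℤ, variationOnFromTo g univ (a + n) (a + n + 1) ≤ (eVariationOn g univ).toReal :=
  Real.tsum_le_of_sum_le (fun _ => variationOnFromTo.nonneg_of_le _ _ (by linarith))
    (hg.sum_variationOnFromTo_int_add_le a)

theorem LocallyBoundedVariationOn.mul_abs_le_integral_add (hg : LocallyBoundedVariationOn g univ)
    {a b : ℝ} (hab : a ≤ b) (hi : IntervalIntegrable (fun x => |g x|) volume a b) :
    (b - a) * |g a| ≤ (∫ x in a..b, |g x|) + (b - a) * variationOnFromTo g univ a b := by
  have hpt : ∀ x ∈ Icc a b, |g a| ≤ |g x| + variationOnFromTo g univ a b := by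
    intro x hx
    have h₁ :=
      variationOnFromTo.abs_sub_le_sub_of_le hg (mem_univ a) (mem_univ a) (mem_univ x) hx.1
    have h₂ := variationOnFromTo.monotoneOn hg (mem_univ a) (mem_univ x) (mem_univ b) hx.2
    rw [variationOnFromTo.self, sub_zero] at h₁
    linarith [abs_sub_abs_le_abs_sub (g a) (g x), abs_sub_comm (g a) (g x)]
  have := intervalIntegral.integral_mono_on hab intervalIntegrable_const
    (hi.add intervalIntegrable_const) hpt
  rwa [intervalIntegral.integral_add hi intervalIntegrable_const, intervalIntegral.integral_const,
    intervalIntegral.integral_const, smul_eq_mul, smul_eq_mul] at this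

theorem summable_abs_int_add (hg_int : Integrable g) (hg : BoundedVariationOn g univ) (u : ℝ) :
    Summable fun n : ℤ => |g (n + u)| := by
  refine Summable.of_nonneg_of_le (fun _ => abs_nonneg _) (fun n => ?_)
    ((hg_int.abs.hasSum_intervalIntegral u).summable.add (hg.summable_variationOnFromTo_int_add u))
  have := hg.locallyBoundedVariationOn.mul_abs_le_integral_add (a := u + n) (b := u + n + 1)
    (by linarith) hg_int.abs.intervalIntegrable
  simpa [add_comm (n : ℝ) u] using this

end variation

noncomputable def periodization (g : ℝ → ℝ) (u : ℝ) : ℝ := ∑' n : ℤ, g (n + u)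

theorem periodic_periodization (g : ℝ → ℝ) : Function.Periodic (periodization g) 1 := by
  intro u
  rw [periodization, periodization, ← (Equiv.addRight (1 : ℤ)).tsum_eq (fun n : ℤ => g (n + u))]
  congr 1 with n
  rw [Equiv.coe_addRight, Int.cast_add, Int.cast_one, add_right_comm, add_assoc]

section periodization

variable {g : ℝ → ℝ}

theorem periodization_sub_le_of_le_of_le (hg_int : Integrable g) (hg : BoundedVariationOn g univ)
    {u v : ℝ} (hvu : v ≤ u) (huv : u ≤ v + 1) :
    periodization g u - periodization g v ≤ (eVariationOn g univ).toReal / 2 := by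
  have hterm : ∀ n : ℤ, (g (n + u) - g (n + v)) + (g (n + u) - g (n + (v + 1))) ≤
      variationOnFromTo g univ (v + n) (v + n + 1) := by
    intro n
    have hloc := hg.locallyBoundedVariationOn
    have h₁ := variationOnFromTo.abs_sub_le_sub_of_le hloc (mem_univ (v + n)) (mem_univ (v + n))
      (mem_univ (n + u)) (by linarith)
    have h₂ := variationOnFromTo.abs_sub_le_sub_of_le hloc (mem_univ (v + n)) (mem_univ (n + u))
      (mem_univ (v + n + 1)) (by linarith)
    rw [variationOnFromTo.self, sub_zero] at h₁
    rw [← add_assoc, add_comm (n : ℝ) v]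
    linarith [le_abs_self (g (n + u) - g (v + n)), neg_abs_le (g (v + n + 1) - g (n + u))]
  have hsum (w : ℝ) : Summable fun n : ℤ => g (n + w) := (summable_abs_int_add hg_int hg w).of_abs
  have htwice : 2 * (periodization g u - periodization g v) =
      ∑' n : ℤ, ((g (n + u) - g (n + v)) + (g (n + u) - g (n + (v + 1)))) := by
    rw [((hsum u).sub (hsum v)).tsum_add ((hsum u).sub (hsum (v + 1))),
      (hsum u).tsum_sub (hsum v), (hsum u).tsum_sub (hsum (v + 1))]
    change _ = _ + (periodization g u - periodization g (v + 1))
    rw [periodic_periodization g v, periodization, periodization]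
    ring
  have := (((hsum u).sub (hsum v)).add ((hsum u).sub (hsum (v + 1)))).tsum_le_tsum hterm
    (hg.summable_variationOnFromTo_int_add v)
  linarith [hg.tsum_variationOnFromTo_int_add_le v]

theorem periodization_sub_le (hg_int : Integrable g) (hg : BoundedVariationOn g univ) (u v : ℝ) :
    periodization g u - periodization g v ≤ (eVariationOn g univ).toReal / 2 := by
  rw [← (periodic_periodization g).sub_int_mul_eq ⌊u - v⌋]
  apply periodization_sub_le_of_le_of_le hg_int hg
  · linarith [Int.floor_le (u - v)]
  · linarith [Int.lt_floor_add_one (u - v)]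

theorem integral_periodization (hg : Integrable g) :
    ∫ u in (0 : ℝ)..1, periodization g u = ∫ x, g x := by
  have hnorm := hg.norm.hasSum_intervalIntegral_comp_add_int
  simp only [intervalIntegral.integral_of_le zero_le_one] at hnorm ⊢
  have := hasSum_integral_of_summable_integral_norm (μ := volume.restrict (Ioc (0 : ℝ) 1))
    (F := fun (n : ℤ) u => g (n + u)) (fun n => (hg.comp_add_left (n : ℝ)).integrableOn)
    (by simpa only [add_comm] using hnorm.summable)
  refine this.unique ?_
  simpa only [intervalIntegral.integral_of_le zero_le_one, add_comm]
    using hg.hasSum_intervalIntegral_comp_add_int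

end periodization

theorem fract_cdf_increment_bound_general
    (g : ℝ → ℝ)
    (hg_int : Integrable g)
    (hg_one : ∫ y, g y = 1)
    (hTV : eVariationOn g univ ≠ ⊤)
    (G : ℝ → ℝ)
    (hG : ∀ z, G z = ∫ u in (0 : ℝ)..z, ∑' n : ℤ, g (n + u)) :
    ∀ z₁ z₂ : ℝ, 0 ≤ z₁ → z₁ < z₂ → z₂ ≤ 1 →
      |(G z₂ - G z₁) - (z₂ - z₁)|
        ≤ (z₂ - z₁) * (1 - (z₂ - z₁)) * (eVariationOn g univ).toReal / 2 := by
  intro z₁ z₂ hz₁ h₁₂ hz₂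
  have hper := periodic_periodization g
  have hone : ∫ u in (0 : ℝ)..1, periodization g u = 1 :=
    (integral_periodization hg_int).trans hg_one
  have hint : ∀ a b, IntervalIntegrable (periodization g) volume a b :=
    hper.intervalIntegrable₀ one_ne_zero
      (intervalIntegral.intervalIntegrable_of_integral_ne_zero (by simp [hone]))
  have hA : G z₂ - G z₁ = ∫ u in z₁..z₂, periodization g u := by
    rw [hG, hG]
    exact intervalIntegral.integral_interval_sub_left (hint _ _) (hint _ _)
  have hB : ∫ u in z₂..z₁ + 1, periodization g u = 1 - ∫ u in z₁..z₂, periodization g u := by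
    rw [eq_sub_iff_add_eq', intervalIntegral.integral_add_adjacent_intervals (hint _ _) (hint _ _),
      hper.intervalIntegral_add_eq z₁ 0, zero_add, hone]
  have h₁ := mul_integral_sub_mul_integral_le h₁₂.le (by linarith) (hint z₁ z₂) (hint z₂ (z₁ + 1))
    fun u _ v _ => periodization_sub_le hg_int hTV u v
  have h₂ := mul_integral_sub_mul_integral_le (by linarith) h₁₂.le (hint z₂ (z₁ + 1)) (hint z₁ z₂)
    fun u _ v _ => periodization_sub_le hg_int hTV u v
  rw [hB] at h₁ h₂
  rw [hA, abs_le]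
  constructor <;> linarith

/-- Dümbgen–Leuenberger Corollary 2: for the CDF `Ḡ` of the fractional part of a random
variable with density `g` of finite total variation,
`|(Ḡ z₂ − Ḡ z₁) − (z₂ − z₁)| ≤ (z₂−z₁)(1−(z₂−z₁))·TV(g)/2`. -/
theorem fract_cdf_increment_bound
    (g : ℝ → ℝ) (hg_nonneg : ∀ y, 0 ≤ g y)
    (hg_int : Integrable g)
    (hg_one : ∫ y, g y = 1)
    (hTV : eVariationOn g univ ≠ ⊤)
    (G : ℝ → ℝ)
    (hG : ∀ z, G z = ∫ u in (0 : ℝ)..z, ∑' n : ℤ, g (n + u)) :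
    ∀ z₁ z₂ : ℝ, 0 ≤ z₁ → z₁ < z₂ → z₂ ≤ 1 →
      |(G z₂ - G z₁) - (z₂ - z₁)|
        ≤ (z₂ - z₁) * (1 - (z₂ - z₁)) * (eVariationOn g univ).toReal / 2 :=
  fract_cdf_increment_bound_general g hg_int hg_one hTV G hG
end

section
/- Let X > 0 be a random variable such that Y = log₁₀ X has a density g that is continuous on ℝ and affine on each interval [n, n+1] for n ∈ ℤ. Then the fractional part of Y is uniformly distributed on [0,1] and X satisfies the Benford law exactly. -/
open Set MeasureTheory Function
open scoped ENNReal

/-!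
Write `f = ofReal ∘ g`. Cutting `ℝ` into the unit intervals `[m, m + 1)` shows that `fract Y`
has density the periodization `x ↦ ∑ₙ f (x + n)` on `[0, 1)`. Affinity of `g` on each
`[n, n + 1]` gives `f (x + n) = (1 - x) f n + x f (n + 1)`, so after reindexing the second
sum the periodization is `(1 - x) S + x S = S` with `S = ∑ₙ f n`, a constant, which must be
`1` since `f` integrates to `1`. Hence `fract Y` is uniform, and the event that the first digit
of `X` is `k` is the event `fract Y ∈ [log₁₀ k, log₁₀ (k + 1))`.
-/

theorem pairwise_disjoint_preimage_sub_intCast {R : Type*} [Ring R] [LinearOrder R]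
    [IsStrictOrderedRing R] [FloorRing R] (s : Set R) :
    Pairwise (Disjoint on fun m : ℤ => (fun x : R => x - m) ⁻¹' (s ∩ Ico 0 1)) := by
  intro m m' hne
  refine disjoint_left.2 ?_
  rintro y ⟨-, h0, h1⟩ ⟨-, h0', h1'⟩
  apply hne
  rw [← Int.floor_eq_iff.2 ⟨sub_nonneg.1 h0, sub_lt_iff_lt_add'.1 h1⟩,
    Int.floor_eq_iff.2 ⟨sub_nonneg.1 h0', sub_lt_iff_lt_add'.1 h1'⟩]

theorem setLIntegral_preimage_fract {f : ℝ → ℝ≥0∞} (hf : Measurable f) {s : Set ℝ}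
    (hs : MeasurableSet s) :
    ∫⁻ y in Int.fract ⁻¹' s, f y = ∫⁻ x in s ∩ Ico 0 1, ∑' n : ℤ, f (x + n) := by
  have hfn (n : ℤ) : Measurable fun x : ℝ => f (x + n) := hf.comp (measurable_add_const _)
  have hA : MeasurableSet (s ∩ Ico (0 : ℝ) 1) := hs.inter measurableSet_Ico
  rw [Int.preimage_fract, lintegral_iUnion (fun m => measurable_sub_const _ hA)
      (pairwise_disjoint_preimage_sub_intCast s),
    lintegral_tsum fun n => (hfn n).aemeasurable]
  refine tsum_congr fun m => ?_
  simpa using (measurePreserving_sub_right volume (m : ℝ)).setLIntegral_comp_preimage hA (hfn m)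

theorem map_fract_withDensity {f : ℝ → ℝ≥0∞} (hf : Measurable f) :
    (volume.withDensity f).map Int.fract
      = (volume.restrict (Ico 0 1)).withDensity fun x => ∑' n : ℤ, f (x + n) := by
  ext s hs
  rw [Measure.map_apply measurable_fract hs, withDensity_apply _ (measurable_fract hs),
    withDensity_apply _ hs, Measure.restrict_restrict hs, setLIntegral_preimage_fract hf hs]

theorem map_fract_withDensity_eq_restrict_Ico {f : ℝ → ℝ≥0∞} (hf : Measurable f)
    (hf_one : ∫⁻ y, f y = 1) {c : ℝ≥0∞} (hper : ∀ x ∈ Ico (0 : ℝ) 1, ∑' n : ℤ, f (x + n) = c) :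
    (volume.withDensity f).map Int.fract = volume.restrict (Ico 0 1) := by
  have hc : c = 1 := by
    have h := setLIntegral_preimage_fract hf MeasurableSet.univ
    rw [preimage_univ, Measure.restrict_univ, hf_one, univ_inter,
      setLIntegral_congr_fun measurableSet_Ico hper, setLIntegral_const, Real.volume_Ico] at h
    simpa using h.symm
  rw [map_fract_withDensity hf,
    withDensity_congr_ae (ae_restrict_of_forall_mem measurableSet_Ico hper), withDensity_const,
    hc, one_smul]

theorem tsum_ofReal_add_intCast_of_affine {g : ℝ → ℝ} (hg_nonneg : ∀ y, 0 ≤ g y)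
    (hg_affine : ∀ n : ℤ, ∀ y ∈ Icc (0 : ℝ) 1, g (n + y) = (1 - y) * g n + y * g (n + 1))
    {x : ℝ} (hx : x ∈ Icc (0 : ℝ) 1) :
    ∑' n : ℤ, ENNReal.ofReal (g (x + n)) = ∑' n : ℤ, ENNReal.ofReal (g n) := by
  obtain ⟨hx0, hx1⟩ := hx
  set F : ℤ → ℝ≥0∞ := fun n => ENNReal.ofReal (g n)
  have hshift : ∑' n : ℤ, F (n + 1) = ∑' n : ℤ, F n := (Equiv.addRight 1).tsum_eq F
  have hterm : ∀ n : ℤ, ENNReal.ofReal (g (x + n))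
      = ENNReal.ofReal (1 - x) * F n + ENNReal.ofReal x * F (n + 1) := by
    intro n
    have h1x : 0 ≤ 1 - x := sub_nonneg.2 hx1
    rw [add_comm, hg_affine n x ⟨hx0, hx1⟩,
      ENNReal.ofReal_add (mul_nonneg h1x (hg_nonneg _)) (mul_nonneg hx0 (hg_nonneg _)),
      ENNReal.ofReal_mul h1x, ENNReal.ofReal_mul hx0]
    simp only [F, Int.cast_add, Int.cast_one]
  calc ∑' n : ℤ, ENNReal.ofReal (g (x + n))
      = ENNReal.ofReal (1 - x) * ∑' n : ℤ, F n + ENNReal.ofReal x * ∑' n : ℤ, F (n + 1) := by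
        rw [tsum_congr hterm, ENNReal.tsum_add, ENNReal.tsum_mul_left, ENNReal.tsum_mul_left]
    _ = (ENNReal.ofReal (1 - x) + ENNReal.ofReal x) * ∑' n : ℤ, F n := by
        rw [hshift, add_mul]
    _ = ∑' n : ℤ, F n := by
        rw [← ENNReal.ofReal_add (sub_nonneg.2 hx1) hx0, sub_add_cancel, ENNReal.ofReal_one,
          one_mul]

theorem logb_mul_zpow_self {b u : ℝ} (hb : 0 < b) (hb_one : b ≠ 1) (hu : 0 < u) (n : ℤ) :
    Real.logb b (u * b ^ n) = Real.logb b u + n := by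
  rw [Real.logb_mul hu.ne' (zpow_pos hb n).ne', ← Real.rpow_intCast, Real.logb_rpow hb hb_one]

theorem sub_intCast_mem_Ico_logb_iff {b u v x : ℝ} (hb : 1 < b) (hu : 0 < u) (hv : 0 < v)
    (hx : 0 < x) (n : ℤ) :
    Real.logb b x - n ∈ Ico (Real.logb b u) (Real.logb b v)
      ↔ x ∈ Ico (u * b ^ n) (v * b ^ n) := by
  have hb0 : 0 < b := zero_lt_one.trans hb
  simp only [mem_Ico, ← Real.logb_le_logb hb (by positivity : 0 < u * b ^ n) hx,
    ← Real.logb_lt_logb_iff hb hx (by positivity : 0 < v * b ^ n),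
    logb_mul_zpow_self hb0 hb.ne' hu, logb_mul_zpow_self hb0 hb.ne' hv,
    le_sub_iff_add_le, sub_lt_iff_lt_add]

theorem Ico_logb_subset_Ico_zero_one {b u v : ℝ} (hb : 1 < b) (hu : 1 ≤ u) (hv : 0 < v)
    (hvb : v ≤ b) : Ico (Real.logb b u) (Real.logb b v) ⊆ Ico 0 1 := by
  refine Ico_subset_Ico (Real.logb_nonneg hb hu) ?_
  calc Real.logb b v ≤ Real.logb b b := Real.logb_le_logb_of_le hb hv hvb
    _ = 1 := Real.logb_self_eq_one hb

theorem exists_mem_Ico_mul_zpow_iff_fract_logb_mem {b u v x : ℝ} (hb : 1 < b) (hu : 1 ≤ u)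
    (hv : 0 < v) (hvb : v ≤ b) (hx : 0 < x) :
    (∃ n : ℤ, x ∈ Ico (u * b ^ n) (v * b ^ n))
      ↔ Int.fract (Real.logb b x) ∈ Ico (Real.logb b u) (Real.logb b v) := by
  rw [← mem_preimage, Int.preimage_fract,
    inter_eq_left.2 (Ico_logb_subset_Ico_zero_one hb hu hv hvb)]
  simp only [mem_iUnion, mem_preimage,
    sub_intCast_mem_Ico_logb_iff hb (zero_lt_one.trans_le hu) hv hx]

/-- If `Y = log₁₀ X` has a continuous density `g` which is affine on each interval
`[n, n+1]` (`n ∈ ℤ`), then the fractional part of `Y` is uniform on `[0,1)` and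
`X` satisfies Benford's law exactly. -/
theorem benford_of_piecewise_affine_density
    {Ω : Type*} [MeasurableSpace Ω] (μ : Measure Ω) [IsProbabilityMeasure μ]
    (X : Ω → ℝ) (hXmeas : Measurable X) (hXpos : ∀ ω, 0 < X ω)
    (Y : Ω → ℝ) (hY : ∀ ω, Y ω = Real.logb 10 (X ω))
    (g : ℝ → ℝ) (hg_nonneg : ∀ y, 0 ≤ g y) (hg_cont : Continuous g)
    (hg_affine : ∀ n : ℤ, ∀ y ∈ Icc (0 : ℝ) 1,
      g (n + y) = (1 - y) * g n + y * g (n + 1))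
    (hdens : Measure.map Y μ
      = volume.withDensity (fun y => ENNReal.ofReal (g y))) :
    Measure.map (fun ω => Int.fract (Y ω)) μ = volume.restrict (Ico (0 : ℝ) 1)
      ∧ ∀ k : ℕ, k ∈ Finset.Icc 1 9 →
          μ {ω | ∃ n : ℤ, X ω ∈ Ico ((k : ℝ) * 10 ^ n) (((k : ℝ) + 1) * 10 ^ n)}
            = ENNReal.ofReal (Real.logb 10 ((k + 1) / k)) := by
  have hYm : Measurable Y := by
    rw [funext hY]
    exact (Real.measurable_log.comp hXmeas).div_const _
  have hg_one : ∫⁻ y, ENNReal.ofReal (g y) = 1 := by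
    rw [← setLIntegral_univ, ← withDensity_apply _ MeasurableSet.univ, ← hdens,
      Measure.map_apply hYm MeasurableSet.univ, preimage_univ, measure_univ]
  have hmap : μ.map (Int.fract ∘ Y) = volume.restrict (Ico 0 1) := by
    rw [← Measure.map_map measurable_fract hYm, hdens]
    exact map_fract_withDensity_eq_restrict_Ico
      (ENNReal.measurable_ofReal.comp hg_cont.measurable) hg_one fun x hx =>
        tsum_ofReal_add_intCast_of_affine hg_nonneg hg_affine (Ico_subset_Icc_self hx)
  refine ⟨hmap, fun k hk => ?_⟩
  obtain ⟨hk1, hk9⟩ := Finset.mem_Icc.1 hk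
  have hk_one : (1 : ℝ) ≤ k := by exact_mod_cast hk1
  have hk10 : (k : ℝ) + 1 ≤ 10 := by norm_cast; omega
  have hset : {ω | ∃ n : ℤ, X ω ∈ Ico ((k : ℝ) * 10 ^ n) (((k : ℝ) + 1) * 10 ^ n)}
      = (Int.fract ∘ Y) ⁻¹' Ico (Real.logb 10 k) (Real.logb 10 (k + 1)) := by
    ext ω
    rw [mem_preimage, comp_apply, hY ω, ← exists_mem_Ico_mul_zpow_iff_fract_logb_mem
      (by norm_num) hk_one (by positivity) hk10 (hXpos ω)]
    rfl
  rw [hset, ← Measure.map_apply (measurable_fract.comp hYm) measurableSet_Ico, hmap,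
    Measure.restrict_apply measurableSet_Ico,
    inter_eq_left.2 (Ico_logb_subset_Ico_zero_one (by norm_num) hk_one (by positivity) hk10),
    Real.volume_Ico, Real.logb_div (by positivity) (by positivity)]
end
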